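/- As f → 0, M₀(f) = a₀ − a₁·f + O(f²); that is, the function f ↦ M₀(f) − a₀ + a₁·f is O(f²) near f = 0. -/
import Mathlib


open MeasureTheory intervalIntegral Asymptotics Filter

noncomputable def w0 (φ : ℝ → ℝ) (f x : ℝ) : ℝ :=
  ∫ s in (0:ℝ)..1, Real.exp (φ (x + s) - φ x - f * s)

noncomputable def M0 (φ : ℝ → ℝ) (f : ℝ) : ℝ := ∫ x in (0:ℝ)..1, w0 φ f x

noncomputable def w1 (φ : ℝ → ℝ) (f x : ℝ) : ℝ :=
  ∫ s in (0:ℝ)..1, (w0 φ f (x + s)) ^ 2 * Real.exp (φ (x + s) - φ x - f * s)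

noncomputable def M1 (φ : ℝ → ℝ) (f : ℝ) : ℝ := ∫ x in (0:ℝ)..1, w1 φ f x


/-- As `f → 0`, `M₀(f) = a₀ − a₁·f + O(f²)`. -/
theorem stmt_6 (φ : ℝ → ℝ) (hφc : Continuous φ) (hφper : ∀ x, φ (x + 1) = φ x)
    (a0 a1 : ℝ)
    (ha0 : a0 = (∫ x in (0:ℝ)..1, Real.exp (-φ x)) * ∫ s in (0:ℝ)..1, Real.exp (φ s))
    (ha1 : a1 = ∫ x in (0:ℝ)..1, ∫ s in (0:ℝ)..1, Real.exp (φ (x + s) - φ x) * s) :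
    (fun f => M0 φ f - a0 + a1 * f) =O[nhds 0] (fun f => f ^ 2) := by
  have hper : Function.Periodic φ 1 := hφper
  -- φ is bounded
  obtain ⟨B, hB⟩ : ∃ B : ℝ, ∀ x, |φ x| ≤ B := by
    obtain ⟨C, hC⟩ := (isCompact_Icc (a := (0:ℝ)) (b := 1)).exists_bound_of_continuousOn
      hφc.continuousOn
    refine ⟨C, fun x => ?_⟩
    have h1 : φ (Int.fract x) = φ x := by
      have h := hper.sub_int_mul_eq (x := x) (n := ⌊x⌋)
      rw [mul_one] at h
      rw [Int.fract]
      exact h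
    have h2 : Int.fract x ∈ Set.Icc (0:ℝ) 1 :=
      ⟨Int.fract_nonneg x, (Int.fract_lt_one x).le⟩
    simpa [h1, Real.norm_eq_abs] using hC _ h2
  set K := Real.exp (B + B) with hK
  have hKpos : 0 < K := Real.exp_pos _
  -- the auxiliary function A
  set A : ℝ → ℝ := fun x => ∫ s in (0:ℝ)..1, Real.exp (φ (x + s) - φ x) * s with hA
  have ha1' : a1 = ∫ x in (0:ℝ)..1, A x := ha1
  -- continuity lemmas
  have hcw0 : ∀ f : ℝ, Continuous (w0 φ f) := by
    intro f
    have : Continuous (Function.uncurry fun x s => Real.exp (φ (x + s) - φ x - f * s)) := by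
      apply Real.continuous_exp.comp
      fun_prop
    exact intervalIntegral.continuous_parametric_intervalIntegral_of_continuous' this 0 1
  have hcA : Continuous A := by
    have : Continuous (Function.uncurry fun x s => Real.exp (φ (x + s) - φ x) * s) := by
      apply Continuous.mul
      · apply Real.continuous_exp.comp; fun_prop
      · fun_prop
    exact intervalIntegral.continuous_parametric_intervalIntegral_of_continuous' this 0 1
  -- a0 = ∫ w0 φ 0
  have hw00 : ∀ x, w0 φ 0 x = Real.exp (-φ x) * ∫ s in (0:ℝ)..1, Real.exp (φ s) := by
    intro x
    have h1 : w0 φ 0 x = ∫ s in (0:ℝ)..1, Real.exp (-φ x) * Real.exp (φ (x + s)) := by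
      unfold w0
      congr 1; funext s
      rw [← Real.exp_add]; ring_nf
    rw [h1, intervalIntegral.integral_const_mul]
    congr 1
    have h2 : (∫ s in (0:ℝ)..1, Real.exp (φ (x + s))) = ∫ t in x..(x+1), Real.exp (φ t) := by
      simpa using intervalIntegral.integral_comp_add_left (fun t => Real.exp (φ t)) x
        (a := (0:ℝ)) (b := 1)
    have hperE : Function.Periodic (fun t => Real.exp (φ t)) 1 := fun t => by
      simp [hφper t]
    have h3 := hperE.intervalIntegral_add_eq x 0
    rw [h2, h3]; norm_num
  have ha0' : a0 = ∫ x in (0:ℝ)..1, w0 φ 0 x := by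
    rw [ha0]
    rw [show (∫ x in (0:ℝ)..1, w0 φ 0 x) =
        ∫ x in (0:ℝ)..1, Real.exp (-φ x) * ∫ s in (0:ℝ)..1, Real.exp (φ s) from
      intervalIntegral.integral_congr fun x _ => hw00 x]
    rw [intervalIntegral.integral_mul_const]
  -- key bound
  have key : ∀ f : ℝ, |f| ≤ 1 → |M0 φ f - a0 + a1 * f| ≤ K * f ^ 2 := by
    intro f hf
    -- pointwise identity
    have hpt : ∀ x : ℝ, w0 φ f x - w0 φ 0 x + f * A x =
        ∫ s in (0:ℝ)..1, Real.exp (φ (x + s) - φ x) *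
          (Real.exp (-(f * s)) - 1 + f * s) := by
      intro x
      have i1 : IntervalIntegrable (fun s => Real.exp (φ (x + s) - φ x) *
          Real.exp (-(f * s))) volume 0 1 := by
        apply Continuous.intervalIntegrable
        apply Continuous.mul
        · apply Real.continuous_exp.comp; fun_prop
        · apply Real.continuous_exp.comp; fun_prop
      have i2 : IntervalIntegrable (fun s => Real.exp (φ (x + s) - φ x)) volume 0 1 := by
        apply Continuous.intervalIntegrable
        apply Real.continuous_exp.comp; fun_prop
      have i3 : IntervalIntegrable (fun s => f * (Real.exp (φ (x + s) - φ x) * s))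
          volume 0 1 := by
        apply Continuous.intervalIntegrable
        apply Continuous.mul continuous_const
        apply Continuous.mul
        · apply Real.continuous_exp.comp; fun_prop
        · fun_prop
      have e1 : w0 φ f x = ∫ s in (0:ℝ)..1, Real.exp (φ (x + s) - φ x) *
          Real.exp (-(f * s)) := by
        unfold w0; congr 1; funext s; rw [← Real.exp_add]; ring_nf
      have e2 : w0 φ 0 x = ∫ s in (0:ℝ)..1, Real.exp (φ (x + s) - φ x) := by
        unfold w0; congr 1; funext s; norm_num
      have e3 : f * A x = ∫ s in (0:ℝ)..1, f * (Real.exp (φ (x + s) - φ x) * s) := by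
        rw [hA]; rw [intervalIntegral.integral_const_mul]
      rw [e1, e2, e3, ← intervalIntegral.integral_sub i1 i2,
        ← intervalIntegral.integral_add (i1.sub i2) i3]
      congr 1; funext s; ring
    -- pointwise bound
    have hbd : ∀ x : ℝ, |w0 φ f x - w0 φ 0 x + f * A x| ≤ K * f ^ 2 := by
      intro x
      rw [hpt x]
      have := intervalIntegral.norm_integral_le_of_norm_le_const
        (a := (0:ℝ)) (b := 1) (C := K * f ^ 2)
        (f := fun s => Real.exp (φ (x + s) - φ x) * (Real.exp (-(f * s)) - 1 + f * s)) ?_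
      · simpa [Real.norm_eq_abs] using this
      · intro s hs
        rw [Set.uIoc_of_le (by norm_num : (0:ℝ) ≤ 1)] at hs
        have hs0 : 0 ≤ s := hs.1.le
        have hs1 : s ≤ 1 := hs.2
        have hfs : |f * s| ≤ 1 := by
          rw [abs_mul]
          calc |f| * |s| ≤ 1 * 1 := by
                apply mul_le_mul hf _ (abs_nonneg s) zero_le_one
                rw [abs_of_nonneg hs0]; exact hs1
            _ = 1 := by ring
        have h1 : |Real.exp (-(f * s)) - 1 + f * s| ≤ (f * s) ^ 2 := by
          have := Real.abs_exp_sub_one_sub_id_le (x := -(f * s)) (by rwa [abs_neg])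
          rw [neg_pow] at this
          simpa [sub_neg_eq_add] using this
        have h2 : (f * s) ^ 2 ≤ f ^ 2 := by
          rw [mul_pow]
          have hs2 : s ^ 2 ≤ 1 := by nlinarith
          calc f ^ 2 * s ^ 2 ≤ f ^ 2 * 1 :=
                mul_le_mul_of_nonneg_left hs2 (sq_nonneg f)
            _ = f ^ 2 := mul_one _
        have h3 : Real.exp (φ (x + s) - φ x) ≤ K := by
          rw [hK]
          apply Real.exp_le_exp.2
          have := abs_le.1 (hB (x + s))
          have := abs_le.1 (hB x)
          linarith
        rw [Real.norm_eq_abs, abs_mul, abs_of_nonneg (Real.exp_pos _).le]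
        calc Real.exp (φ (x + s) - φ x) * |Real.exp (-(f * s)) - 1 + f * s|
            ≤ K * (f * s) ^ 2 := by
              apply mul_le_mul h3 h1 (abs_nonneg _) hKpos.le
          _ ≤ K * f ^ 2 := mul_le_mul_of_nonneg_left h2 hKpos.le
    -- assemble
    have hsum : M0 φ f - a0 + a1 * f =
        ∫ x in (0:ℝ)..1, (w0 φ f x - w0 φ 0 x + f * A x) := by
      have iw0f := (hcw0 f).intervalIntegrable (μ := volume) (a := (0:ℝ)) (b := 1)
      have iw00 := (hcw0 0).intervalIntegrable (μ := volume) (a := (0:ℝ)) (b := 1)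
      have iA : IntervalIntegrable (fun x => f * A x) volume 0 1 :=
        (continuous_const.mul hcA).intervalIntegrable 0 1
      rw [intervalIntegral.integral_add (iw0f.sub iw00) iA,
        intervalIntegral.integral_sub iw0f iw00, intervalIntegral.integral_const_mul]
      rw [ha0', ha1']
      unfold M0
      ring
    rw [hsum]
    have := intervalIntegral.norm_integral_le_of_norm_le_const
      (a := (0:ℝ)) (b := 1) (C := K * f ^ 2)
      (f := fun x => w0 φ f x - w0 φ 0 x + f * A x)
      (fun x _ => by simpa [Real.norm_eq_abs] using hbd x)
    simpa [Real.norm_eq_abs] using this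
  -- conclude
  rw [Asymptotics.isBigO_iff]
  refine ⟨K, ?_⟩
  have hev : ∀ᶠ f : ℝ in nhds 0, |f| ≤ 1 := by
    filter_upwards [Metric.ball_mem_nhds (0:ℝ) one_pos] with f hf
    rw [Metric.mem_ball, Real.dist_eq, sub_zero] at hf
    exact hf.le
  filter_upwards [hev] with f hf
  have := key f hf
  rw [Real.norm_eq_abs, Real.norm_eq_abs, abs_of_nonneg (sq_nonneg f)]
  exact this
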